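/- arXiv:math/0610816 — 2 statements merged into one kernel-verified Lean document; each statement's English description precedes it below -/
import Mathlib

section
/- Let N ≥ 1, let F_N be the free group on N generators x₁, …, x_N, let M be a unital complex algebra, α an action of F_N on M by algebra automorphisms, and E_M the canonical conditional expectation on M ⋊_α F_N. For each k ∈ {1, …, N} let A_k be the subalgebra of elements supported on the cyclic subgroup ⟨x_k⟩ generated by x_k. Then the family (A_k)_{k=1}^N is free with amalgamation over M with respect to E_M: for every n ≥ 1, every sequence of indices i₁, …, iₙ ∈ {1, …, N} with i_j ≠ i_{j+1} for 1 ≤ j < n, and every x_j ∈ A_{i_j} with E_M(x_j) = 0 for all j, one has E_M(x₁x₂⋯xₙ) = 0. (This is the freeness underlying M ⋊_α F_N = (M ⋊_α ℤ) *_M ⋯ *_M (M ⋊_α ℤ), N times.) -/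
open Finsupp

noncomputable section

variable {M : Type*} [Ring M] [Algebra ℂ M] {G : Type*} [Group G]

/-- The algebraic crossed product `M ⋊_α G`: finitely supported functions `G →₀ M`,
with multiplication determined by `(m u_g)(m' u_h) = (m · α_g(m')) u_{gh}`. -/
def CrossedProduct {M : Type*} [Ring M] [Algebra ℂ M] {G : Type*} [Group G]
    (_α : G →* (M ≃ₐ[ℂ] M)) : Type _ := G →₀ M

namespace CrossedProduct

variable (α : G →* (M ≃ₐ[ℂ] M))

/-- Reinterpret an element of the crossed product as a finitely supported function. -/
def toF (x : CrossedProduct α) : G →₀ M := x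

/-- Build an element of the crossed product from a finitely supported function. -/
def ofF (x : G →₀ M) : CrossedProduct α := x

instance : AddCommGroup (CrossedProduct α) := inferInstanceAs (AddCommGroup (G →₀ M))
instance : Module ℂ (CrossedProduct α) := inferInstanceAs (Module ℂ (G →₀ M))

@[simp] lemma toF_add (x y : CrossedProduct α) : toF α (x + y) = toF α x + toF α y := rfl
@[simp] lemma toF_zero : toF α (0 : CrossedProduct α) = 0 := rfl
@[simp] lemma toF_smul (c : ℂ) (x : CrossedProduct α) : toF α (c • x) = c • toF α x := rfl
@[simp] lemma ofF_add (f g : G →₀ M) : ofF α (f + g) = ofF α f + ofF α g := rfl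
lemma toF_injective : Function.Injective (toF α) := fun _ _ h => h
@[simp] lemma toF_ofF (f : G →₀ M) : toF α (ofF α f) = f := rfl
@[simp] lemma ofF_zero : ofF α (0 : G →₀ M) = 0 := rfl

instance : Mul (CrossedProduct α) :=
  ⟨fun x y => ofF α ((toF α x).sum fun g m => (toF α y).sum fun h n =>
      Finsupp.single (g * h) (m * α g n))⟩

lemma toF_mul (x y : CrossedProduct α) :
    toF α (x * y) = (toF α x).sum fun g m => (toF α y).sum fun h n =>
      Finsupp.single (g * h) (m * α g n) := rfl

instance : One (CrossedProduct α) := ⟨ofF α (Finsupp.single 1 1)⟩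

lemma toF_one : toF α (1 : CrossedProduct α) = Finsupp.single 1 1 := rfl

lemma ofF_single_mul (g h : G) (m n : M) :
    ofF α (Finsupp.single g m) * ofF α (Finsupp.single h n)
      = ofF α (Finsupp.single (g * h) (m * α g n)) := by
  apply toF_injective
  rw [toF_mul, toF_ofF, toF_ofF, toF_ofF]
  rw [Finsupp.sum_single_index (by simp), Finsupp.sum_single_index (by simp)]

private lemma mul_add' (x y z : CrossedProduct α) : x * (y + z) = x * y + x * z := by
  apply toF_injective
  rw [toF_add, toF_mul, toF_mul, toF_mul, ← Finsupp.sum_add]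
  refine Finsupp.sum_congr fun g _ => ?_
  rw [toF_add, Finsupp.sum_add_index' (fun h => by simp) (fun h n₁ n₂ => by
    simp [mul_add, Finsupp.single_add])]

private lemma add_mul' (x y z : CrossedProduct α) : (x + y) * z = x * z + y * z := by
  apply toF_injective
  rw [toF_add, toF_mul, toF_mul, toF_mul, toF_add]
  rw [Finsupp.sum_add_index' (fun g => by simp) (fun g m₁ m₂ => by
    rw [← Finsupp.sum_add]
    exact Finsupp.sum_congr fun h _ => by simp [add_mul, Finsupp.single_add])]

private lemma zero_mul' (x : CrossedProduct α) : 0 * x = 0 := by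
  apply toF_injective
  rw [toF_mul, toF_zero, Finsupp.sum_zero_index]

private lemma mul_zero' (x : CrossedProduct α) : x * 0 = 0 := by
  apply toF_injective
  rw [toF_mul, toF_zero]
  simp [Finsupp.sum_zero_index]

private lemma one_mul' (x : CrossedProduct α) : 1 * x = x := by
  apply toF_injective
  rw [toF_mul, toF_one, Finsupp.sum_single_index (by simp)]
  calc (toF α x).sum (fun h n => Finsupp.single ((1:G) * h) ((1:M) * (α 1) n))
      = (toF α x).sum (fun h n => Finsupp.single h n) :=
        Finsupp.sum_congr fun h _ => by simp
    _ = toF α x := Finsupp.sum_single _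

private lemma mul_one' (x : CrossedProduct α) : x * 1 = x := by
  apply toF_injective
  rw [toF_mul, toF_one]
  have : ∀ g : G, ∀ m : M,
      (Finsupp.single (1 : G) (1 : M)).sum (fun h n => Finsupp.single (g * h) (m * α g n))
        = Finsupp.single g m := by
    intro g m
    rw [Finsupp.sum_single_index (by simp)]
    simp
  calc (toF α x).sum (fun g m => (Finsupp.single (1:G) (1:M)).sum fun h n =>
          Finsupp.single (g * h) (m * α g n))
      = (toF α x).sum (fun g m => Finsupp.single g m) :=
        Finsupp.sum_congr fun g _ => this g _
    _ = toF α x := Finsupp.sum_single _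

private lemma mul_assoc' (x y z : CrossedProduct α) : x * y * z = x * (y * z) := by
  have hx : x = ofF α (toF α x) := rfl
  have hy : y = ofF α (toF α y) := rfl
  have hz : z = ofF α (toF α z) := rfl
  rw [hx, hy, hz]
  generalize (toF α x) = f
  generalize (toF α y) = g
  generalize (toF α z) = h
  induction f using Finsupp.induction_linear with
  | zero => rw [ofF_zero α, zero_mul' α, zero_mul' α, zero_mul' α]
  | add f₁ f₂ ih₁ ih₂ => rw [ofF_add, add_mul' α, add_mul' α, add_mul' α, ih₁, ih₂]
  | single a b =>
    induction g using Finsupp.induction_linear with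
    | zero => rw [ofF_zero α, mul_zero' α, zero_mul' α, mul_zero' α]
    | add g₁ g₂ ih₁ ih₂ => rw [ofF_add, mul_add' α, add_mul' α, add_mul' α, mul_add' α, ih₁, ih₂]
    | single c d =>
      induction h using Finsupp.induction_linear with
      | zero => rw [ofF_zero α, mul_zero' α, mul_zero' α, mul_zero' α]
      | add h₁ h₂ ih₁ ih₂ => rw [ofF_add, mul_add' α, mul_add' α, mul_add' α, ih₁, ih₂]
      | single e s =>
        rw [ofF_single_mul, ofF_single_mul, ofF_single_mul, ofF_single_mul]
        simp [mul_assoc, map_mul, AlgEquiv.mul_apply]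

instance : Ring (CrossedProduct α) where
  __ := (inferInstance : AddCommGroup (CrossedProduct α))
  left_distrib := mul_add' α
  right_distrib := fun a b c => add_mul' α a b c
  zero_mul := zero_mul' α
  mul_zero := mul_zero' α
  mul_assoc := mul_assoc' α
  one_mul := one_mul' α
  mul_one := mul_one' α

instance : Algebra ℂ (CrossedProduct α) :=
  Algebra.ofModule
    (fun c x y => by
      apply toF_injective
      simp only [toF_mul, toF_smul]
      rw [Finsupp.sum_smul_index' (fun g => by simp), Finsupp.smul_sum]
      refine Finsupp.sum_congr fun g _ => ?_
      rw [Finsupp.smul_sum]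
      exact Finsupp.sum_congr fun h _ => by
        rw [smul_mul_assoc, Finsupp.smul_single])
    (fun c x y => by
      apply toF_injective
      simp only [toF_mul, toF_smul]
      rw [Finsupp.smul_sum]
      refine Finsupp.sum_congr fun g _ => ?_
      rw [Finsupp.smul_sum, Finsupp.sum_smul_index' (fun h => by simp)]
      exact Finsupp.sum_congr fun h _ => by
        rw [map_smul, mul_smul_comm, Finsupp.smul_single])

/-- The element `m u_g` of the crossed product. -/
def single (g : G) (m : M) : CrossedProduct α := ofF α (Finsupp.single g m)

/-- The coefficient of `x ∈ M ⋊_α G` at a group element `g`. -/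
def coeff (x : CrossedProduct α) (g : G) : M := toF α x g

/-- The canonical conditional expectation `E_M : M ⋊_α G → M`, reading off
the coefficient at the group identity. -/
def E : CrossedProduct α →ₗ[ℂ] M where
  toFun x := coeff α x 1
  map_add' x y := by simp [coeff]
  map_smul' c x := by simp [coeff]

@[simp] lemma E_apply (x : CrossedProduct α) : E α x = coeff α x 1 := rfl

end CrossedProduct

/-- `suppIn α S x` : the element `x` of the crossed product is supported on the subset `S ⊆ G`. -/
def CrossedProduct.suppIn {M : Type*} [Ring M] [Algebra ℂ M] {G : Type*} [Group G]
    (α : G →* (M ≃ₐ[ℂ] M)) (S : Set G) (x : CrossedProduct α) : Prop :=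
  ∀ g : G, g ∉ S → CrossedProduct.coeff α x g = 0

/-! A centred element of `A_k` is supported on `⟨x_k⟩ \ {1}`, and the support of a product lies
in the pointwise product of the supports. So an alternating product of centred elements is
supported on products `g₁ ⋯ gₙ` with `1 ≠ gⱼ ∈ ⟨x_{iⱼ}⟩`, none of which is `1` by the normal form
theorem for the free product `F_N ≅ ℤ * ⋯ * ℤ`; hence its coefficient at `1` vanishes. -/

namespace Monoid.CoprodI.Word

variable {ι : Type*} {H : ι → Type*} [∀ i, Monoid (H i)] [DecidableEq ι] [∀ i, DecidableEq (H i)]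

theorem prod_ne_one {w : Word H} (hw : w ≠ empty) : w.prod ≠ 1 := fun h =>
  hw (equiv.symm.injective (h.trans prod_empty.symm))

end Monoid.CoprodI.Word

theorem freeGroupEquivCoprodI_mem_mrange_of_mem_zpowers {ι : Type*} {a : ι} {f : FreeGroup ι}
    (hf : f ∈ Subgroup.zpowers (FreeGroup.of a)) :
    freeGroupEquivCoprodI f ∈
      MonoidHom.mrange (Monoid.CoprodI.of (M := fun _ : ι => FreeGroup Unit) (i := a)) := by
  obtain ⟨k, rfl⟩ := hf
  exact ⟨FreeGroup.of () ^ k, by simp⟩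

namespace FreeGroup

variable {ι : Type*}

theorem prod_ofFn_ne_one_of_mem_zpowers {n : ℕ} (hn : 1 ≤ n) {i : Fin n → ι}
    (halt : (List.ofFn i).IsChain (· ≠ ·)) {f : Fin n → FreeGroup ι}
    (hf : ∀ j, f j ∈ Subgroup.zpowers (of (i j))) (hf1 : ∀ j, f j ≠ 1) :
    (List.ofFn f).prod ≠ 1 := by
  classical
  choose y hy using fun j => freeGroupEquivCoprodI_mem_mrange_of_mem_zpowers (hf j)
  have hy1 (j : Fin n) : y j ≠ 1 := fun h => hf1 j <| freeGroupEquivCoprodI.injective <| by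
    rw [← hy j, h, _root_.map_one, _root_.map_one]
  let w : Monoid.CoprodI.Word (fun _ : ι => FreeGroup Unit) :=
    { toList := List.ofFn fun j => ⟨i j, y j⟩
      ne_one := by simpa [List.mem_ofFn] using hy1
      chain_ne := by simpa [List.isChain_ofFn] using halt }
  have hw : w.prod = freeGroupEquivCoprodI (List.ofFn f).prod := by
    simp only [Monoid.CoprodI.Word.prod, w, map_list_prod, List.map_ofFn, Function.comp_def, hy]
  have hw_ne : w ≠ Monoid.CoprodI.Word.empty := fun hw0 => by
    have := List.ofFn_eq_nil_iff.mp (congrArg Monoid.CoprodI.Word.toList hw0)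
    omega
  intro h
  exact Monoid.CoprodI.Word.prod_ne_one hw_ne (by rw [hw, h, _root_.map_one])

end FreeGroup

namespace CrossedProduct

variable (α : G →* (M ≃ₐ[ℂ] M))

open Pointwise

lemma suppIn_one : suppIn α (1 : Set G) (1 : CrossedProduct α) := fun _ hg =>
  Finsupp.single_eq_of_ne' (Ne.symm hg)

lemma suppIn_mul {S T : Set G} {x y : CrossedProduct α} (hx : suppIn α S x)
    (hy : suppIn α T y) : suppIn α (S * T) (x * y) := by
  intro g hg
  show toF α (x * y) g = 0
  rw [toF_mul, Finsupp.sum_apply]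
  refine Finset.sum_eq_zero fun g₁ hg₁ => ?_
  dsimp only
  rw [Finsupp.sum_apply]
  refine Finset.sum_eq_zero fun g₂ hg₂ => Finsupp.single_eq_of_ne fun h => hg ?_
  have h₁ : g₁ ∈ S := not_not.mp fun h => Finsupp.mem_support_iff.mp hg₁ (hx g₁ h)
  have h₂ : g₂ ∈ T := not_not.mp fun h => Finsupp.mem_support_iff.mp hg₂ (hy g₂ h)
  exact h ▸ Set.mul_mem_mul h₁ h₂

lemma suppIn_prod_ofFn {n : ℕ} {S : Fin n → Set G} {x : Fin n → CrossedProduct α}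
    (hx : ∀ j, suppIn α (S j) (x j)) : suppIn α (List.ofFn S).prod (List.ofFn x).prod := by
  induction n with
  | zero => simpa using suppIn_one α
  | succ n ih =>
    simpa only [List.ofFn_succ, List.prod_cons] using suppIn_mul α (hx 0) (ih fun j => hx j.succ)

end CrossedProduct

theorem crossedProduct_freeGroup_amalgamatedFree_general {M : Type*} [Ring M] [Algebra ℂ M]
    (N : ℕ) (α : FreeGroup (Fin N) →* (M ≃ₐ[ℂ] M))
    (n : ℕ) (hn : 1 ≤ n) (i : Fin n → Fin N)
    (halt : ∀ j : Fin n, (h : (j : ℕ) + 1 < n) → i j ≠ i ⟨(j : ℕ) + 1, h⟩)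
    (x : Fin n → CrossedProduct α)
    (hsupp : ∀ j, CrossedProduct.suppIn α
      ((Subgroup.zpowers (FreeGroup.of (i j)) : Subgroup (FreeGroup (Fin N))) : Set _) (x j))
    (hE : ∀ j, CrossedProduct.E α (x j) = 0) :
    CrossedProduct.E α (List.ofFn x).prod = 0 := by
  have hcentered (j : Fin n) : CrossedProduct.suppIn α
      ((Subgroup.zpowers (FreeGroup.of (i j)) : Set _) \ {1}) (x j) := fun g hg => by
    by_cases h1 : g = 1
    · exact h1 ▸ hE j
    · exact hsupp j g fun hmem => hg ⟨hmem, h1⟩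
  rw [CrossedProduct.E_apply]
  refine CrossedProduct.suppIn_prod_ofFn α hcentered 1 fun h1 => ?_
  obtain ⟨f, hf⟩ := Set.mem_prod_list_ofFn.mp h1
  exact FreeGroup.prod_ofFn_ne_one_of_mem_zpowers hn
    (List.isChain_ofFn.mpr fun j hj => halt ⟨j, by omega⟩ hj)
    (fun j => (f j).2.1) (fun j => (f j).2.2) hf

/-- for the free group `F_N` on generators `x₁, …, x_N`, the subalgebras `A_k` of
`M ⋊_α F_N` of elements supported on the cyclic subgroup `⟨x_k⟩` form a family which is free with
amalgamation over `M` with respect to `E_M`: every alternating product of `E_M`-centered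
elements is `E_M`-centered. -/
theorem crossedProduct_freeGroup_amalgamatedFree {M : Type*} [Ring M] [Algebra ℂ M]
    (N : ℕ) (hN : 1 ≤ N) (α : FreeGroup (Fin N) →* (M ≃ₐ[ℂ] M))
    (n : ℕ) (hn : 1 ≤ n) (i : Fin n → Fin N)
    (halt : ∀ j : Fin n, (h : (j : ℕ) + 1 < n) → i j ≠ i ⟨(j : ℕ) + 1, h⟩)
    (x : Fin n → CrossedProduct α)
    (hsupp : ∀ j, CrossedProduct.suppIn α
      ((Subgroup.zpowers (FreeGroup.of (i j)) : Subgroup (FreeGroup (Fin N))) : Set _) (x j))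
    (hE : ∀ j, CrossedProduct.E α (x j) = 0) :
    CrossedProduct.E α (List.ofFn x).prod = 0 :=
  crossedProduct_freeGroup_amalgamatedFree_general N α n hn i halt x hsupp hE
end
end

section
/- Let G₁ and G₂ be groups and G = G₁ * G₂ their free product with canonical injections ι₁, ι₂. Equip the group algebra ℂ[G] with the canonical trace tr : ℂ[G] → ℂ sending ∑_g r_g g to r_e. For k = 1, 2 let B_k ⊆ ℂ[G] be the ℂ-linear span of ι_k(G_k) (a subalgebra isomorphic to ℂ[G_k]). Then B₁ and B₂ are freely independent with respect to tr: for every n ≥ 1, every sequence of indices i₁, …, iₙ ∈ {1,2} with i_j ≠ i_{j+1} for 1 ≤ j < n, and every y_j ∈ B_{i_j} with tr(y_j) = 0 for all j, one has tr(y₁y₂⋯yₙ) = 0. -/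
noncomputable section

/-- The canonical trace on the group algebra `ℂ[G]`, reading off the coefficient at the
group identity. -/
def groupAlgTrace (G : Type*) [Group G] : MonoidAlgebra ℂ G →ₗ[ℂ] ℂ where
  toFun x := x.coeff 1
  map_add' x y := Finsupp.add_apply x.coeff y.coeff 1
  map_smul' c x := Finsupp.smul_apply c x.coeff 1

/-!
A centred element of `span ι_k(G_k)` is supported on `ι_k(G_k) \ {1}`, and the support of a
product lies in the pointwise product of the supports. Hence every group element in the support
of an alternating product of centred elements is a reduced word of length `n ≥ 1` in the free
product, so it is not `1`, and the coefficient at `1`, which is the trace, vanishes.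
-/

open Monoid Pointwise

namespace Monoid.CoprodI

variable {ι : Type*} {M : ι → Type*} [∀ i, Monoid (M i)]

theorem prod_ofFn_ne_one {n : ℕ} (hn : n ≠ 0) {s : Fin n → ι}
    (hs : (List.ofFn s).IsChain (· ≠ ·)) (m : ∀ j, M (s j)) (hm : ∀ j, m j ≠ 1) :
    (List.ofFn fun j => of (m j)).prod ≠ 1 := by
  classical
  let w : Word M :=
    { toList := List.ofFn fun j => ⟨s j, m j⟩
      ne_one := by
        simp only [List.mem_ofFn, forall_exists_index]
        rintro _ j rfl
        exact hm j
      chain_ne := List.isChain_ofFn.2 (List.isChain_ofFn.1 hs) }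
  intro h1
  have hw : w = Word.empty := Word.equiv.symm.injective <| by
    change w.prod = Word.empty.prod
    rwa [Word.prod_empty, Word.prod, List.map_ofFn]
  exact hn (by simpa [w] using congrArg Word.toList hw)

end Monoid.CoprodI

namespace Monoid.Coprod

universe u v

variable (M : Type u) (N : Type v) [Monoid M] [Monoid N]

/-- `M ∗ N` is compared with the indexed free product of this family, which has a theory of
reduced words; `ULift` puts both factors in one universe. -/
abbrev summands : Bool → Type (max u v) :=
  fun b => cond b (ULift.{v} M) (ULift.{u} N)

instance : ∀ b, Monoid (summands M N b)
  | true => inferInstanceAs (Monoid (ULift M))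
  | false => inferInstanceAs (Monoid (ULift N))

def toCoprodI : M ∗ N →* CoprodI (summands M N) :=
  lift ((CoprodI.of (i := true)).comp (MulEquiv.ulift (α := M)).symm.toMonoidHom)
    ((CoprodI.of (i := false)).comp (MulEquiv.ulift (α := N)).symm.toMonoidHom)

variable {M N}

theorem exists_ne_one_of_eq_toCoprodI {b : Bool} {x : M ∗ N}
    (hx : x ∈ cond b (Set.range inl) (Set.range inr) \ {1}) :
    ∃ m : summands M N b, m ≠ 1 ∧ CoprodI.of m = toCoprodI M N x := by
  cases b
  all_goals
    obtain ⟨⟨a, rfl⟩, ha⟩ := hx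
    refine ⟨ULift.up a, fun h => ha ?_, ?_⟩
    · rw [show a = 1 from congrArg ULift.down h, map_one, Set.mem_singleton_iff]
    · simp only [toCoprodI, lift_apply_inl, lift_apply_inr]
      rfl

theorem one_notMem_prod_ofFn {n : ℕ} (hn : n ≠ 0) {s : Fin n → Bool}
    (hs : (List.ofFn s).IsChain (· ≠ ·)) :
    (1 : M ∗ N) ∉
      (List.ofFn fun j => cond (s j) (Set.range inl) (Set.range inr) \ {1}).prod := by
  rw [Set.mem_prod_list_ofFn]
  rintro ⟨g, hg⟩
  choose m hm1 hmg using fun j => exists_ne_one_of_eq_toCoprodI (g j).2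
  refine CoprodI.prod_ofFn_ne_one hn hs m hm1 ?_
  rw [funext hmg]
  have h := congrArg (toCoprodI M N) hg
  rwa [map_list_prod, List.map_ofFn, map_one] at h

end Monoid.Coprod

namespace MonoidAlgebra

variable {k G : Type*} [Semiring k] [Monoid G]

theorem mul_mem_supported_mul {x y : MonoidAlgebra k G} {s t : Set G} (hx : x ∈ supported k k s)
    (hy : y ∈ supported k k t) : x * y ∈ supported k k (s * t) := by
  classical
  rw [mem_supported] at hx hy ⊢
  calc ((x * y).coeff.support : Set G) ⊆ ↑(x.coeff.support * y.coeff.support) :=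
        Finset.coe_subset.2 (support_coeff_mul_subset x y)
    _ ⊆ s * t := by rw [Finset.coe_mul]; exact Set.mul_subset_mul hx hy

theorem prod_ofFn_mem_supported {n : ℕ} {x : Fin n → MonoidAlgebra k G} {s : Fin n → Set G}
    (hx : ∀ j, x j ∈ supported k k (s j)) :
    (List.ofFn x).prod ∈ supported k k (List.ofFn s).prod := by
  induction n with
  | zero =>
    simp only [List.ofFn_zero, List.prod_nil]
    rw [mem_supported, ← Finset.coe_one]
    exact Finset.coe_subset.2 support_coeff_one_subset
  | succ n ih =>
    simp only [List.ofFn_succ, List.prod_cons]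
    exact mul_mem_supported_mul (hx 0) (ih fun j => hx j.succ)

theorem mem_supported_diff_one_of_mem_span {s : Set G} {x : MonoidAlgebra k G}
    (hx : x ∈ Submodule.span k (of k G '' s)) (h1 : x.coeff 1 = 0) :
    x ∈ supported k k (s \ {1}) := by
  rw [show of k G '' s = (fun g => single g 1) '' s from rfl, ← supported_eq_span_single] at hx
  rw [mem_supported'] at hx ⊢
  intro g hg
  by_cases hg1 : g = 1
  · rwa [hg1]
  · exact hx g fun hgs => hg ⟨hgs, hg1⟩

end MonoidAlgebra

open MonoidAlgebra in
/-- in the group algebra `ℂ[G₁ * G₂]` with its canonical trace, the subalgebras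
`B₁ = span ι₁(G₁)` and `B₂ = span ι₂(G₂)` are freely independent: every alternating product of
trace-centered elements has trace `0`. -/
theorem groupAlgebra_coprod_freelyIndependent {G₁ G₂ : Type*} [Group G₁] [Group G₂]
    (n : ℕ) (hn : 1 ≤ n) (i : Fin n → Fin 2)
    (halt : ∀ j : Fin n, (h : (j : ℕ) + 1 < n) → i j ≠ i ⟨(j : ℕ) + 1, h⟩)
    (y : Fin n → MonoidAlgebra ℂ (Monoid.Coprod G₁ G₂))
    (hmem : ∀ j, y j ∈ Submodule.span ℂ
      (⇑(MonoidAlgebra.of ℂ (Monoid.Coprod G₁ G₂)) ''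
        (if i j = 0
          then Set.range ⇑(Monoid.Coprod.inl : G₁ →* Monoid.Coprod G₁ G₂)
          else Set.range ⇑(Monoid.Coprod.inr : G₂ →* Monoid.Coprod G₁ G₂))))
    (htr : ∀ j, groupAlgTrace (Monoid.Coprod G₁ G₂) (y j) = 0) :
    groupAlgTrace (Monoid.Coprod G₁ G₂) (List.ofFn y).prod = 0 := by
  have hs : (List.ofFn fun j => decide (i j = 0)).IsChain (· ≠ ·) :=
    List.isChain_ofFn.2 fun k hk => by
      have : i ⟨k, _⟩ ≠ i ⟨k + 1, hk⟩ := halt ⟨k, by omega⟩ hk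
      simp only [ne_eq, decide_eq_decide]
      omega
  have hy : ∀ j, y j ∈ supported ℂ ℂ (cond (decide (i j = 0))
      (Set.range Monoid.Coprod.inl) (Set.range Monoid.Coprod.inr) \ {1}) := by
    intro j
    rw [Bool.cond_decide]
    exact mem_supported_diff_one_of_mem_span (hmem j) (htr j)
  exact mem_supported'.1 (prod_ofFn_mem_supported hy) 1
    (Monoid.Coprod.one_notMem_prod_ofFn (by omega) hs)
end
end
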